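/- Let T be a bounded linear operator on a complex Hilbert space H with polar decomposition T = U|T|, and let T̃ = |T|^{1/2} U |T|^{1/2} denote its Aluthge transform. Then w(T) ≤ (1/2)‖T‖ + (1/2)·w(T̃). -/

import Mathlib

open ContinuousLinearMap

noncomputable def nr {E : Type*} [NormedAddCommGroup E] [InnerProductSpace ℂ E]
    (T : E →L[ℂ] E) : ℝ :=
  sSup {r : ℝ | ∃ x : E, ‖x‖ = 1 ∧ r = ‖(inner ℂ (T x) x : ℂ)‖}

noncomputable def er {E : Type*} [NormedAddCommGroup E] [InnerProductSpace ℂ E]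
    (B C : E →L[ℂ] E) : ℝ :=
  sSup {r : ℝ | ∃ x : E, ‖x‖ = 1 ∧
    r = Real.sqrt (‖(inner ℂ (B x) x : ℂ)‖ ^ 2 + ‖(inner ℂ (C x) x : ℂ)‖ ^ 2)}

/-! For a unimodular `z` and a unit vector `x` with `z̄ ⟪T x, x⟫ = |⟪T x, x⟫|` one has
`2 |⟪T x, x⟫| = ⟪(z T + z̄ T†) x, x⟫ ≤ ‖z T + z̄ T†‖`, so it suffices to bound the norm of the
self-adjoint operator `V S² + S² V†`, where `S = |T|^{1/2}` and `V = z U` is a contraction.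
That operator factors as `C R` through `H ⊕ H`, so its norm, which equals its spectral radius,
is at most the spectral radius of `R C` (the nonzero spectra of `C R` and `R C` agree), hence at
most the numerical radius of the operator matrix `R C = [[S V S, S²], [S V†V S, (S V S)†]]`.
Its diagonal contributes `w(S V S) = w(T̃)` and its off-diagonal `‖S‖² = ‖T‖`. -/

open scoped InnerProductSpace ComplexConjugate

theorem isStarProjection_star_mul_self_of_mul_star_mul {R : Type*} [Semigroup R] [StarMul R]
    {u : R} (hu : u * star u * u = u) : IsStarProjection (star u * u) where
  isIdempotentElem := by rw [IsIdempotentElem, mul_assoc, ← mul_assoc u, hu]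
  isSelfAdjoint := .star_mul_self u

section CStarRing

variable {A : Type*} [NormedRing A] [StarRing A] [CStarRing A]

theorem norm_le_one_of_mul_star_mul {u : A} (hu : u * star u * u = u) : ‖u‖ ≤ 1 := by
  have h := (isStarProjection_star_mul_self_of_mul_star_mul hu).norm_le
  rw [CStarRing.norm_star_mul_self] at h
  nlinarith [norm_nonneg u]

theorem norm_eq_of_mul_self_eq_star_mul_self {a t : A} (ha : IsSelfAdjoint a)
    (h : a * a = star t * t) : ‖a‖ = ‖t‖ :=
  (sq_eq_sq₀ (norm_nonneg _) (norm_nonneg _)).1 <| by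
    rw [← ha.norm_mul_self, h, CStarRing.norm_star_mul_self, sq]

end CStarRing

section NumericalRadius

variable {E : Type*} [NormedAddCommGroup E] [InnerProductSpace ℂ E]

theorem nr_nonneg (T : E →L[ℂ] E) : 0 ≤ nr T :=
  Real.sSup_nonneg fun _ ⟨_, _, hr⟩ => hr ▸ norm_nonneg _

theorem nr_le {T : E →L[ℂ] E} {c : ℝ} (hc : 0 ≤ c) (h : ∀ x, ‖x‖ = 1 → ‖⟪T x, x⟫_ℂ‖ ≤ c) :
    nr T ≤ c :=
  Real.sSup_le (fun _ ⟨x, hx, hr⟩ => hr ▸ h x hx) hc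

theorem norm_inner_self_le_norm (T : E →L[ℂ] E) {x : E} (hx : ‖x‖ = 1) : ‖⟪T x, x⟫_ℂ‖ ≤ ‖T‖ :=
  calc ‖⟪T x, x⟫_ℂ‖ ≤ ‖T x‖ * ‖x‖ := norm_inner_le_norm _ _
    _ ≤ ‖T‖ := by simpa [hx] using T.le_opNorm x

theorem norm_inner_le_nr_of_norm_eq_one (T : E →L[ℂ] E) {x : E} (hx : ‖x‖ = 1) :
    ‖⟪T x, x⟫_ℂ‖ ≤ nr T :=
  le_csSup ⟨‖T‖, fun _ ⟨_, hy, hr⟩ => hr ▸ norm_inner_self_le_norm T hy⟩ ⟨x, hx, rfl⟩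

theorem norm_inner_le_nr_mul_sq (T : E →L[ℂ] E) (u : E) : ‖⟪T u, u⟫_ℂ‖ ≤ nr T * ‖u‖ ^ 2 := by
  rcases eq_or_ne u 0 with rfl | hu
  · simp
  have h := norm_inner_le_nr_of_norm_eq_one T (x := (‖u‖ : ℂ)⁻¹ • u) (norm_smul_inv_norm hu)
  simp only [map_smul, inner_smul_left, inner_smul_right, norm_mul, map_inv₀, norm_inv,
    Complex.norm_conj, Complex.norm_real, norm_norm, ← mul_assoc, ← mul_inv] at h
  rwa [inv_mul_le_iff₀ (by positivity), ← sq, mul_comm] at h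

theorem nr_smul (c : ℂ) (T : E →L[ℂ] E) : nr (c • T) = ‖c‖ * nr T := by
  rw [nr, nr, ← smul_eq_mul, ← Real.sSup_smul_of_nonneg (norm_nonneg c)]
  congr 1
  ext r
  simp only [Set.mem_ofPred_eq, Set.mem_smul_set, smul_apply, inner_smul_left, norm_mul,
    Complex.norm_conj, smul_eq_mul]
  constructor
  · rintro ⟨x, hx, rfl⟩; exact ⟨_, ⟨x, hx, rfl⟩, rfl⟩
  · rintro ⟨_, ⟨x, hx, rfl⟩, rfl⟩; exact ⟨x, hx, rfl⟩

theorem nr_adjoint [CompleteSpace E] (T : E →L[ℂ] E) : nr (adjoint T) = nr T := by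
  simp only [nr, adjoint_inner_left, ← inner_conj_symm (T _), Complex.norm_conj]

end NumericalRadius

section Spectrum

variable {𝕜 E F : Type*} [NontriviallyNormedField 𝕜] [NormedAddCommGroup E] [NormedSpace 𝕜 E]
  [NormedAddCommGroup F] [NormedSpace 𝕜 F]

theorem ContinuousLinearMap.mem_spectrum_comp_swap {R : E →L[𝕜] F} {C : F →L[𝕜] E} {k : 𝕜}
    (hk : k ≠ 0) (h : k ∈ spectrum 𝕜 (C ∘L R)) : k ∈ spectrum 𝕜 (R ∘L C) := by
  rw [spectrum.mem_iff] at h ⊢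
  contrapose! h
  obtain ⟨W, hW⟩ := h
  have hW₁ : ∀ y, k • W⁻¹.val y - R (C (W⁻¹.val y)) = y := fun y => by
    simpa [hW, Algebra.algebraMap_eq_smul_one] using DFunLike.congr_fun W.mul_inv y
  have hW₂ : ∀ y, W⁻¹.val (k • y - R (C y)) = y := fun y => by
    simpa [hW, Algebra.algebraMap_eq_smul_one] using DFunLike.congr_fun W.inv_mul y
  -- `k⁻¹ (1 + C (k - R C)⁻¹ R)` inverts `k - C R`
  refine isUnit_iff_exists.2 ⟨k⁻¹ • (1 + C ∘L (W⁻¹.val ∘L R)), ?_, ?_⟩ <;> ext x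
  · have hx : R (C (W⁻¹.val (R x))) = k • W⁻¹.val (R x) - R x := by
      linear_combination (norm := module) -hW₁ (R x)
    simp [Algebra.algebraMap_eq_smul_one, smul_sub, hx, smul_smul, hk]
  · simp [Algebra.algebraMap_eq_smul_one, smul_add, smul_sub, hW₂, smul_smul, hk]

end Spectrum

section HilbertSpectrum

variable {E F : Type*} [NormedAddCommGroup E] [InnerProductSpace ℂ E] [CompleteSpace E]
  [NormedAddCommGroup F] [InnerProductSpace ℂ F] [CompleteSpace F]

theorem ContinuousLinearMap.norm_le_of_mem_spectrum {N : E →L[ℂ] E} {c : ℝ}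
    (h : ∀ u, ‖⟪N u, u⟫_ℂ‖ ≤ c * ‖u‖ ^ 2) {k : ℂ} (hk : k ∈ spectrum ℂ N) : ‖k‖ ≤ c := by
  by_contra! hck
  refine spectrum.mem_iff.1 hk (isUnit_of_forall_le_norm_inner_map _
    (c := ⟨‖k‖ - c, (sub_pos.2 hck).le⟩) (sub_pos.2 hck) fun u => ?_)
  have hku : ‖⟪k • u, u⟫_ℂ‖ = ‖u‖ ^ 2 * ‖k‖ := by
    simp [inner_self_eq_norm_sq_to_K]
  calc ‖u‖ ^ 2 * (‖k‖ - c) = ‖⟪k • u, u⟫_ℂ‖ - c * ‖u‖ ^ 2 := by rw [hku]; ring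
    _ ≤ ‖⟪k • u, u⟫_ℂ‖ - ‖⟪N u, u⟫_ℂ‖ := by gcongr; exact h u
    _ ≤ ‖⟪k • u - N u, u⟫_ℂ‖ := by rw [inner_sub_left]; exact norm_sub_norm_le _ _
    _ = ‖⟪(algebraMap ℂ (E →L[ℂ] E) k - N) u, u⟫_ℂ‖ := by
      simp [Algebra.algebraMap_eq_smul_one]

theorem IsSelfAdjoint.norm_comp_le {R : E →L[ℂ] F} {C : F →L[ℂ] E} (hCR : IsSelfAdjoint (C ∘L R))
    {c : ℝ} (hc : 0 ≤ c) (h : ∀ w, ‖⟪R (C w), w⟫_ℂ‖ ≤ c * ‖w‖ ^ 2) : ‖C ∘L R‖ ≤ c := by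
  have hspec : spectralRadius ℂ (C ∘L R) ≤ ENNReal.ofReal c := by
    refine iSup₂_le fun k hk => ?_
    rw [← enorm_eq_nnnorm, ← ofReal_norm]
    refine ENNReal.ofReal_le_ofReal ?_
    rcases eq_or_ne k 0 with rfl | hk0
    · simpa using hc
    · exact norm_le_of_mem_spectrum h (mem_spectrum_comp_swap hk0 hk)
  rwa [hCR.spectralRadius_eq_nnnorm, ← enorm_eq_nnnorm, ← ofReal_norm,
    ENNReal.ofReal_le_ofReal_iff hc] at hspec

end HilbertSpectrum

section Aluthge

variable {E : Type*} [NormedAddCommGroup E] [InnerProductSpace ℂ E]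

theorem norm_inner_le_of_blocks {v w : WithLp 2 (E × E)} {X Y Z V : E →L[ℂ] E}
    (h₁ : v.fst = X w.fst + Y w.snd) (h₂ : v.snd = Z w.fst + V w.snd) :
    ‖⟪v, w⟫_ℂ‖ ≤ nr X * ‖w.fst‖ ^ 2 + (‖Y‖ + ‖Z‖) * (‖w.fst‖ * ‖w.snd‖) + nr V * ‖w.snd‖ ^ 2 := by
  have off_diag : ∀ (L : E →L[ℂ] E) (a b : E), ‖⟪L b, a⟫_ℂ‖ ≤ ‖L‖ * (‖a‖ * ‖b‖) := fun L a b =>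
    calc ‖⟪L b, a⟫_ℂ‖ ≤ ‖L b‖ * ‖a‖ := norm_inner_le_norm _ _
      _ ≤ ‖L‖ * ‖b‖ * ‖a‖ := by gcongr; exact L.le_opNorm b
      _ = ‖L‖ * (‖a‖ * ‖b‖) := by ring
  change ‖⟪v.fst, w.fst⟫_ℂ + ⟪v.snd, w.snd⟫_ℂ‖ ≤ _
  rw [h₁, h₂, inner_add_left, inner_add_left]
  calc _ ≤ ‖⟪X w.fst, w.fst⟫_ℂ‖ + ‖⟪Y w.snd, w.fst⟫_ℂ‖
        + (‖⟪Z w.fst, w.snd⟫_ℂ‖ + ‖⟪V w.snd, w.snd⟫_ℂ‖) :=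
      (norm_add_le _ _).trans (add_le_add (norm_add_le _ _) (norm_add_le _ _))
    _ ≤ _ := by
      grw [norm_inner_le_nr_mul_sq X, norm_inner_le_nr_mul_sq V, off_diag Y, off_diag Z]
      linarith

variable [CompleteSpace E]

theorem norm_add_adjoint_le {T U S : E →L[ℂ] E} (hS : IsSelfAdjoint S) (hU : ‖U‖ ≤ 1)
    (hT : T = U * (S * S)) : ‖T + adjoint T‖ ≤ ‖S‖ ^ 2 + nr (S * U * S) := by
  -- `T + T† = C R` with `R x = (S x, S U† x)` and `C (a, b) = U S a + S b`
  let R : E →L[ℂ] WithLp 2 (E × E) :=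
    (WithLp.prodContinuousLinearEquiv 2 ℂ E E).symm ∘L S.prod (S * adjoint U)
  let C : WithLp 2 (E × E) →L[ℂ] E :=
    (U * S) ∘L WithLp.fstL 2 ℂ E E + S ∘L WithLp.sndL 2 ℂ E E
  have hAdj : adjoint T = S * S * adjoint U := by
    rw [hT, ← star_eq_adjoint, star_mul, star_mul, hS.star_eq, star_eq_adjoint]
  have hAdj' : adjoint (S * U * S) = S * adjoint U * S := by
    rw [← star_eq_adjoint, star_mul, star_mul, hS.star_eq, star_eq_adjoint, mul_assoc]
  have hCR : C ∘L R = T + adjoint T := by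
    rw [hAdj]; ext x; simp [R, C, hT]
  have hSS : ‖S * S‖ ≤ ‖S‖ ^ 2 := (norm_mul_le S S).trans_eq (sq _).symm
  have hSPS : ‖S * (adjoint U * U) * S‖ ≤ ‖S‖ ^ 2 := by
    have hP : ‖adjoint U * U‖ ≤ 1 := (norm_mul_le _ _).trans <| by
      rw [← star_eq_adjoint, norm_star]; exact mul_le_one₀ hU (norm_nonneg _) hU
    grw [norm_mul_le, norm_mul_le, hP, mul_one, sq]
  have hsa : IsSelfAdjoint (C ∘L R) := by
    rw [hCR, ← star_eq_adjoint]; exact .add_star_self T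
  rw [← hCR]
  refine hsa.norm_comp_le (add_nonneg (sq_nonneg _) (nr_nonneg _)) fun w => ?_
  have h₁ : (R (C w)).fst = (S * U * S) w.fst + (S * S) w.snd := by simp [R, C]
  have h₂ : (R (C w)).snd = (S * (adjoint U * U) * S) w.fst + adjoint (S * U * S) w.snd := by
    simp [R, C, hAdj']
  have hb := norm_inner_le_of_blocks h₁ h₂
  rw [nr_adjoint] at hb
  rw [WithLp.prod_norm_sq_eq_of_L2]
  nlinarith [sq_nonneg (‖w.fst‖ - ‖w.snd‖), mul_nonneg (norm_nonneg w.fst) (norm_nonneg w.snd)]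

end Aluthge

theorem two_mul_nr_le {E : Type*} [NormedAddCommGroup E] [InnerProductSpace ℂ E] [CompleteSpace E]
    {T : E →L[ℂ] E} {c : ℝ} (h : ∀ z : ℂ, ‖z‖ = 1 → ‖z • T + conj z • adjoint T‖ ≤ c) :
    2 * nr T ≤ c := by
  have hc : 0 ≤ c := (norm_nonneg _).trans (h 1 (by simp))
  suffices nr T ≤ c / 2 by linarith
  refine nr_le (by positivity) fun x hx => ?_
  set ζ := ⟪T x, x⟫_ℂ
  set z := Complex.exp (ζ.arg * Complex.I)
  have hz : ‖z‖ = 1 := Complex.norm_exp_ofReal_mul_I _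
  have hζ : conj z * ζ = ‖ζ‖ := by
    conv_lhs => rw [← Complex.norm_mul_exp_arg_mul_I ζ]
    rw [mul_left_comm, Complex.conj_mul', hz]; simp
  have hζ' : z * conj ζ = ‖ζ‖ := by simpa using congrArg conj hζ
  have hD : ⟪(z • T + conj z • adjoint T) x, x⟫_ℂ = 2 * ‖ζ‖ := by
    rw [add_apply, smul_apply, smul_apply, inner_add_left, inner_smul_left, inner_smul_left,
      adjoint_inner_left, ← inner_conj_symm x (T x), Complex.conj_conj, hζ, hζ']
    ring
  have : 2 * ‖ζ‖ ≤ c :=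
    calc 2 * ‖ζ‖ = ‖⟪(z • T + conj z • adjoint T) x, x⟫_ℂ‖ := by rw [hD]; simp
      _ ≤ ‖z • T + conj z • adjoint T‖ := norm_inner_self_le_norm _ hx
      _ ≤ c := h z hz
  linarith

theorem stmt_19_general {H : Type*} [NormedAddCommGroup H] [InnerProductSpace ℂ H] [CompleteSpace H]
    (T U absT sqrtAbsT : H →L[ℂ] H)
    (habs_sa : IsSelfAdjoint absT)
    (habs_sq : absT * absT = adjoint T * T)
    (hsqrt_sa : IsSelfAdjoint sqrtAbsT)
    (hsqrt_sq : sqrtAbsT * sqrtAbsT = absT)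
    (hpolar : T = U * absT)
    (hpartial : U * adjoint U * U = U) :
    nr T ≤ (1 / 2) * ‖T‖ + (1 / 2) * nr (sqrtAbsT * U * sqrtAbsT) := by
  have hU : ‖U‖ ≤ 1 := norm_le_one_of_mul_star_mul (by rwa [star_eq_adjoint])
  have hS : ‖sqrtAbsT‖ ^ 2 = ‖T‖ := by
    rw [← hsqrt_sa.norm_mul_self, hsqrt_sq,
      norm_eq_of_mul_self_eq_star_mul_self habs_sa (by rwa [star_eq_adjoint])]
  suffices 2 * nr T ≤ ‖T‖ + nr (sqrtAbsT * U * sqrtAbsT) by linarith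
  refine two_mul_nr_le fun z hz => ?_
  -- rotating `U` by the unimodular `z` rotates `T` and its Aluthge transform alike
  have key := norm_add_adjoint_le (T := z • T) hsqrt_sa (U := z • U)
    (by rwa [norm_smul, hz, one_mul]) (by rw [hpolar, hsqrt_sq, smul_mul_assoc])
  rwa [map_smulₛₗ, mul_smul_comm, smul_mul_assoc, nr_smul, hz, one_mul, hS] at key

theorem stmt_19 {H : Type*} [NormedAddCommGroup H] [InnerProductSpace ℂ H] [CompleteSpace H]
    (T U absT sqrtAbsT : H →L[ℂ] H)
    (habs_sa : IsSelfAdjoint absT) (habs_pos : 0 ≤ absT)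
    (habs_sq : absT * absT = adjoint T * T)
    (hsqrt_sa : IsSelfAdjoint sqrtAbsT) (hsqrt_pos : 0 ≤ sqrtAbsT)
    (hsqrt_sq : sqrtAbsT * sqrtAbsT = absT)
    (hpolar : T = U * absT)
    (hpartial : U * adjoint U * U = U) :
    nr T ≤ (1 / 2) * ‖T‖ + (1 / 2) * nr (sqrtAbsT * U * sqrtAbsT) :=
  stmt_19_general T U absT sqrtAbsT habs_sa habs_sq hsqrt_sa hsqrt_sq hpolar hpartial
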